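/- Let D be a discrete probability distribution over m values with at least two values of positive probability. If no value has probability greater than 2/3, then the Shannon entropy satisfies H(D) > 0.9. -/
import Mathlib


open Finset

private lemma term_ge {a c : ℝ} (ha : 0 ≤ a) (hc : 0 < c) (hac : a ≤ c) :
    a * Real.logb 2 (1 / c) ≤ a * Real.logb 2 (1 / a) := by
  rcases ha.eq_or_lt with h | h
  · simp [← h]
  · refine mul_le_mul_of_nonneg_left ?_ ha
    exact Real.logb_le_logb_of_le (by norm_num) (by positivity)
      (one_div_le_one_div_of_le h hac)

private lemma log_three_bounds : (8 * Real.log 2 - 13/243) / 5 ≤ Real.log 3 := by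
  have h : Real.log (256/243) ≤ 256/243 - 1 := Real.log_le_sub_one_of_pos (by norm_num)
  have he : Real.log (256/243) = 8 * Real.log 2 - 5 * Real.log 3 := by
    rw [Real.log_div (by norm_num) (by norm_num),
      show (256:ℝ) = 2 ^ 8 by norm_num, show (243:ℝ) = 3 ^ 5 by norm_num,
      Real.log_pow, Real.log_pow]
    push_cast; ring
  rw [he] at h
  linarith

/-- If a discrete distribution has at least two values of positive probability and no value of
probability greater than `2/3`, then its Shannon entropy exceeds `0.9`. -/
theorem entropy_gt_of_no_heavy_value {Ω : Type*} [Fintype Ω]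
    (D : Ω → ℝ) (hnn : ∀ x, 0 ≤ D x) (hsum : ∑ x, D x = 1)
    (htwo : ∃ x y : Ω, x ≠ y ∧ 0 < D x ∧ 0 < D y)
    (hbound : ∀ x, D x ≤ 2 / 3) :
    0.9 < ∑ x, D x * Real.logb 2 (1 / D x) := by
  classical
  obtain ⟨x1, y1, hxy, hx1, hy1⟩ := htwo
  obtain ⟨x0, -, hx0⟩ := Finset.exists_max_image univ D ⟨x1, mem_univ x1⟩
  set p := D x0 with hp_def
  have hp_pos : 0 < p := lt_of_lt_of_le hx1 (hx0 x1 (mem_univ x1))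
  have hp23 : p ≤ 2/3 := hbound x0
  by_cases hp : p ≤ 1/2
  · -- max probability at most 1/2 : entropy at least 1
    have h1 : ∀ x ∈ univ, D x * Real.logb 2 (1/p) ≤ D x * Real.logb 2 (1 / D x) :=
      fun x _ => term_ge (hnn x) hp_pos (hx0 x (mem_univ x))
    have h2p : (2:ℝ) ≤ 1/p := by
      rw [le_one_div (by norm_num) hp_pos]; linarith
    have h2 : (1:ℝ) ≤ Real.logb 2 (1/p) := by
      calc (1:ℝ) = Real.logb 2 2 := (Real.logb_self_eq_one (by norm_num)).symm
        _ ≤ _ := Real.logb_le_logb_of_le (by norm_num) (by norm_num) h2p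
    calc (0.9:ℝ) < 1 := by norm_num
      _ ≤ Real.logb 2 (1/p) := h2
      _ = ∑ x, D x * Real.logb 2 (1/p) := by rw [← Finset.sum_mul, hsum, one_mul]
      _ ≤ ∑ x, D x * Real.logb 2 (1 / D x) := Finset.sum_le_sum h1
  · -- max probability p ∈ (1/2, 2/3]
    push_neg at hp
    have h1p : 0 < 1 - p := by linarith
    have hq : ∑ x ∈ univ.erase x0, D x = 1 - p := by
      have h := Finset.sum_erase_add univ D (mem_univ x0)
      rw [hsum] at h; linarith
    have hle : ∀ x ∈ univ.erase x0, D x ≤ 1 - p := by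
      intro x hx
      rw [← hq]
      exact Finset.single_le_sum (fun y _ => hnn y) hx
    have hsplit : ∑ x, D x * Real.logb 2 (1 / D x)
        = (∑ x ∈ univ.erase x0, D x * Real.logb 2 (1 / D x)) + p * Real.logb 2 (1/p) :=
      (Finset.sum_erase_add univ _ (mem_univ x0)).symm
    have htail : (1 - p) * Real.logb 2 (1/(1-p))
        ≤ ∑ x ∈ univ.erase x0, D x * Real.logb 2 (1 / D x) := by
      calc (1 - p) * Real.logb 2 (1/(1-p))
          = ∑ x ∈ univ.erase x0, D x * Real.logb 2 (1/(1-p)) := by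
            rw [← Finset.sum_mul, hq]
        _ ≤ _ := Finset.sum_le_sum fun x hx => term_ge (hnn x) h1p (hle x hx)
    have hmain : 0.9 < p * Real.logb 2 (1/p) + (1 - p) * Real.logb 2 (1/(1-p)) := by
      have l2pos : 0 < Real.log 2 := Real.log_pos (by norm_num)
      have key : 0.9 * Real.log 2 < p * Real.log (1/p) + (1-p) * Real.log (1/(1-p)) := by
        have t1 : Real.log (3*p/2) ≤ 3*p/2 - 1 := Real.log_le_sub_one_of_pos (by positivity)
        have e1 : Real.log (3*p/2) = Real.log 3 + Real.log p - Real.log 2 := by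
          rw [Real.log_div (by positivity) (by norm_num),
            Real.log_mul (by norm_num) (ne_of_gt hp_pos)]
        have t2 : Real.log (3*(1-p)) ≤ 3*(1-p) - 1 := Real.log_le_sub_one_of_pos (by positivity)
        have e2 : Real.log (3*(1-p)) = Real.log 3 + Real.log (1-p) :=
          Real.log_mul (by norm_num) (ne_of_gt h1p)
        have i1 : Real.log (1/p) = - Real.log p := by rw [one_div, Real.log_inv]
        have i2 : Real.log (1/(1-p)) = - Real.log (1-p) := by rw [one_div, Real.log_inv]
        have l3 := log_three_bounds
        have l2a := Real.log_two_gt_d9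
        have l2b := Real.log_two_lt_d9
        rw [e1] at t1
        rw [e2] at t2
        rw [i1, i2]
        nlinarith [mul_nonneg (sub_nonneg.mpr hp.le) (sub_nonneg.mpr hp23),
          mul_pos hp_pos h1p, sq_nonneg (p - 1/2), sq_nonneg (p - 2/3)]
      have : p * Real.logb 2 (1/p) + (1 - p) * Real.logb 2 (1/(1-p))
          = (p * Real.log (1/p) + (1-p) * Real.log (1/(1-p))) / Real.log 2 := by
        simp only [Real.logb]
        field_simp
      rw [this, lt_div_iff₀ l2pos]
      linarith
    linarith [hsplit, htail, hmain]
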